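/- For every positive even integer m and every p ∈ (0,1), setting a_m := tanh( (1/m) · arccosh((1+p)/(1−p)) ), there exist two nonnegative, symmetric (i.e. invariant under t ↦ −t) finite measures ν₀ and ν₁ on ℝ whose supports are contained in [−1, −a_m] ∪ [a_m, 1] and which satisfy: ν₀(ℝ) = p, ν₁(ℝ) = 1, and ∫ t^q dν₀(t) = ∫ t^q dν₁(t) for every integer q = 1, …, m. -/

import Mathlib

open MeasureTheory ProbabilityTheory Real
open scoped ENNReal NNReal

noncomputable section

namespace SparsityModel

/-! ## The Gaussian vector model and the sparsity testing problem -/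

/-- `gaussP n θ σ` is the law on `ℝⁿ` of `Y = θ + ε` where the `ε i` are independent
centered Gaussians with variance `σ²`. -/
def gaussP (n : ℕ) (θ : Fin n → ℝ) (σ : ℝ) : Measure (Fin n → ℝ) :=
  Measure.pi fun i => gaussianReal (θ i) (Real.toNNReal (σ ^ 2))

/-- `‖θ‖₀`, the number of nonzero coordinates of `θ`. -/
def sparsity {n : ℕ} (θ : Fin n → ℝ) : ℕ := Nat.card {i : Fin n // θ i ≠ 0}

/-- `B₀[k]`, the set of `k`-sparse vectors. -/
def B0 (n k : ℕ) : Set (Fin n → ℝ) := {θ | sparsity θ ≤ k}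

/-- Euclidean distance on `ℝⁿ`. -/
def l2dist {n : ℕ} (θ u : Fin n → ℝ) : ℝ := Real.sqrt (∑ i, (θ i - u i) ^ 2)

/-- `d₂(θ, B₀[k])`, the Euclidean distance from `θ` to the set of `k`-sparse vectors. -/
def distB0 {n : ℕ} (θ : Fin n → ℝ) (k : ℕ) : ℝ := sInf ((fun u => l2dist θ u) '' B0 n k)

/-- `B₀[k₀+Δ, k₀, ρ]`, the `(k₀+Δ)`-sparse vectors at distance at least `ρ` from `B₀[k₀]`. -/
def B0far (n k₀ Δ : ℕ) (ρ : ℝ) : Set (Fin n → ℝ) :=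
  {θ | θ ∈ B0 n (k₀ + Δ) ∧ ρ ≤ distB0 θ k₀}

/-- Risk of a test `T` for the sparsity testing problem with known noise level `σ`. -/
def risk (n : ℕ) (σ : ℝ) (T : (Fin n → ℝ) → Bool) (k₀ Δ : ℕ) (ρ : ℝ) : ℝ≥0∞ :=
  (⨆ θ ∈ B0 n k₀, gaussP n θ σ {y | T y = true}) +
    ⨆ θ ∈ B0far n k₀ Δ ρ, gaussP n θ σ {y | T y = false}

/-- Separation distance of a test `T`. -/
def sepDist (n : ℕ) (σ γ : ℝ) (T : (Fin n → ℝ) → Bool) (k₀ Δ : ℕ) : ℝ :=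
  sSup {ρ : ℝ | 0 < ρ ∧ ENNReal.ofReal γ < risk n σ T k₀ Δ ρ}

/-- Minimax separation distance `ρ*_γ[k₀, Δ]` (known variance). -/
def minimaxSep (n : ℕ) (σ γ : ℝ) (k₀ Δ : ℕ) : ℝ :=
  sInf {r : ℝ | ∃ T : (Fin n → ℝ) → Bool, Measurable T ∧ r = sepDist n σ γ T k₀ Δ}

/-- Risk of a test `T` for the sparsity testing problem with unknown noise level
`σ ∈ [σm, σp]`. -/
def riskVar (n : ℕ) (σm σp : ℝ) (T : (Fin n → ℝ) → Bool) (k₀ Δ : ℕ) (ρ : ℝ) : ℝ≥0∞ :=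
  (⨆ θ ∈ B0 n k₀, ⨆ σ ∈ Set.Icc σm σp, gaussP n θ σ {y | T y = true}) +
    ⨆ θ ∈ B0far n k₀ Δ ρ, ⨆ σ ∈ Set.Icc σm σp, gaussP n θ σ {y | T y = false}

/-- Separation distance of a test `T`, unknown variance. -/
def sepDistVar (n : ℕ) (σm σp γ : ℝ) (T : (Fin n → ℝ) → Bool) (k₀ Δ : ℕ) : ℝ :=
  sSup {ρ : ℝ | 0 < ρ ∧ ENNReal.ofReal γ < riskVar n σm σp T k₀ Δ ρ}

/-- Minimax separation distance `ρ*_{γ,var}[k₀, Δ]` (unknown variance). -/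
def minimaxSepVar (n : ℕ) (σm σp γ : ℝ) (k₀ Δ : ℕ) : ℝ :=
  sInf {r : ℝ | ∃ T : (Fin n → ℝ) → Bool, Measurable T ∧ r = sepDistVar n σm σp γ T k₀ Δ}

/-! ## Statistics and tests (known variance) -/

/-- Standard Gaussian survival function `Φ(t) = P(N(0,1) ≥ t)`. -/
def gaussSurv (t : ℝ) : ℝ := (gaussianReal 0 1 (Set.Ici t)).toReal

/-- Standard Gaussian density `φ`. -/
def stdGaussDens (t : ℝ) : ℝ := Real.exp (-t ^ 2 / 2) / Real.sqrt (2 * π)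

/-- `N_t`, the number of coordinates of `Y` of absolute value at least `t`. -/
def Ncount {n : ℕ} (Y : Fin n → ℝ) (t : ℝ) : ℕ := Nat.card {i : Fin n // t ≤ |Y i|}

/-- `|θ_{(k)}|`, the `k`-th largest coordinate of `θ` in absolute value (for `1 ≤ k ≤ n`). -/
def ordAbs {n : ℕ} (θ : Fin n → ℝ) (k : ℕ) : ℝ :=
  sSup {c : ℝ | k ≤ Nat.card {i : Fin n // c ≤ |θ i|}}

/-- `t*_α := ⌈√(2 log(4n/α))⌉`. -/
def tHCstar (n : ℕ) (α : ℝ) : ℕ := ⌈Real.sqrt (2 * Real.log (4 * n / α))⌉₊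

/-- Threshold `u^{HC}_{t,α}`. -/
def uHC (n t : ℕ) (α : ℝ) : ℝ :=
  2 * Real.sqrt ((n : ℝ) * gaussSurv t * Real.log ((t : ℝ) ^ 2 * π ^ 2 / (3 * α))) +
    2 / 3 * Real.log ((t : ℝ) ^ 2 * π ^ 2 / (3 * α))

/-- The Higher-Criticism test `T^{HC}_{α,k₀}` (rejection event). -/
def THC (n : ℕ) (σ α : ℝ) (k₀ : ℕ) (Y : Fin n → ℝ) : Prop :=
  k₀ + 1 ≤ Ncount Y (σ * tHCstar n α) ∨
    ∃ t : ℕ, 1 ≤ t ∧ t ≤ tHCstar n α ∧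
      (k₀ : ℝ) + 2 * ((n : ℝ) - k₀) * gaussSurv t + uHC n t α ≤ (Ncount Y (σ * t) : ℝ)

/-- `κ_s(x) := ∫_{-1}^1 (1-|ξ|) e^{s²ξ²/2} cos(sξx) dξ`. -/
def kappaFun (s x : ℝ) : ℝ :=
  ∫ ξ in (-1 : ℝ)..1, (1 - |ξ|) * Real.exp (s ^ 2 * ξ ^ 2 / 2) * Real.cos (s * ξ * x)

/-- The bulk statistic `Z(s)`. -/
def Zstat {n : ℕ} (σ s : ℝ) (Y : Fin n → ℝ) : ℝ := ∑ i, (1 - kappaFun s (Y i / σ))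

/-- `s_{k₀} := √(log(e k₀²/n)) ∨ 1`. -/
def sB (n k₀ : ℕ) : ℝ :=
  max (Real.sqrt (Real.log (Real.exp 1 * (k₀ : ℝ) ^ 2 / n))) 1

/-- Threshold `u^B_{k₀,α}`. -/
def uB (n k₀ : ℕ) (α : ℝ) : ℝ :=
  Real.exp ((sB n k₀) ^ 2 / 2) / sB n k₀ * Real.sqrt (8 * n * Real.log (2 / α))

/-- The bulk test `T^B_{α,k₀}` (rejection event). -/
def TB (n : ℕ) (σ α : ℝ) (k₀ : ℕ) (Y : Fin n → ℝ) : Prop :=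
  (k₀ : ℝ) + uB n k₀ α ≤ Zstat σ (sB n k₀) Y

/-- `η_{r,w}(x)`. -/
def etaFun (r w x : ℝ) : ℝ :=
  r / (1 - 2 * gaussSurv r) *
    ∫ ξ in (-1 : ℝ)..1,
      Real.exp (-r ^ 2 * ξ ^ 2 / 2) / Real.sqrt (2 * π) * Real.exp (ξ ^ 2 * w ^ 2 / 2) *
        Real.cos (ξ * w * x)

/-- The intermediary statistic `V(r,w)`. -/
def Vstat {n : ℕ} (σ r w : ℝ) (Y : Fin n → ℝ) : ℝ := ∑ i, (1 - etaFun r w (Y i / σ))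

/-- `l_{k₀} := ⌈(k₀ √n)^{1/2}⌉`. -/
def lmin (n k₀ : ℕ) : ℕ := ⌈Real.sqrt ((k₀ : ℝ) * Real.sqrt n)⌉₊

/-- The dyadic collection `L_{k₀} = {l_{k₀}, 2 l_{k₀}, …, l_max}` with
`l_max = 2^{⌊log₂(k₀/l_{k₀})⌋} l_{k₀} / 4`. -/
def Lcal (n k₀ : ℕ) : Set ℕ :=
  {l | ∃ j : ℕ, l = 2 ^ j * lmin n k₀ ∧ 4 * l ≤ 2 ^ (Nat.log 2 (k₀ / lmin n k₀)) * lmin n k₀}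

/-- `r_{k₀,l} := √(2 log(k₀/l))`. -/
def rI (k₀ l : ℕ) : ℝ := Real.sqrt (2 * Real.log ((k₀ : ℝ) / l))

/-- `w_l := √(log(l/√n))`. -/
def wI (n l : ℕ) : ℝ := Real.sqrt (Real.log ((l : ℝ) / Real.sqrt n))

/-- Threshold `u^I_{k₀,l,α}`. -/
def uI (n k₀ l : ℕ) (α : ℝ) : ℝ :=
  Real.sqrt (2 * l * Real.sqrt n *
    Real.log (π ^ 2 * (1 + Real.logb 2 ((l : ℝ) / lmin n k₀)) ^ 2 / (6 * α)))

/-- The intermediary test `T^I_{α,k₀}` (rejection event). -/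
def TI (n : ℕ) (σ α : ℝ) (k₀ : ℕ) (Y : Fin n → ℝ) : Prop :=
  ∃ l ∈ Lcal n k₀, (k₀ : ℝ) + l + uI n k₀ l α ≤ Vstat σ (rI k₀ l) (wI n l) Y

/-- The combined test `T^C_{α,k₀}` (rejection event). -/
def TC (n : ℕ) (σ α : ℝ) (k₀ : ℕ) (Y : Fin n → ℝ) : Prop :=
  if 20 * Real.sqrt n ≤ (k₀ : ℝ) then
    THC n σ (α / 3) k₀ Y ∨ TB n σ (α / 3) k₀ Y ∨ TI n σ (α / 3) k₀ Y
  else THC n σ (α / 2) k₀ Y ∨ TB n σ (α / 2) k₀ Y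

/-- The rate function `ψ_{k₀,q}`. -/
def psi (n k₀ q : ℕ) : ℝ :=
  if (k₀ : ℝ) ≤ Real.sqrt n then Real.sqrt (Real.log (1 + Real.sqrt n / q))
  else if q ≤ k₀ then
    Real.sqrt (min ((Real.log (1 + (k₀ : ℝ) / q)) ^ 2 / Real.log (1 + (k₀ : ℝ) / Real.sqrt n))
      (Real.log (1 + (k₀ : ℝ) / q)))
  else Real.sqrt ((k₀ : ℝ) / ((q : ℝ) * Real.log (1 + (k₀ : ℝ) / Real.sqrt n)))

/-! ## The sparsity estimator -/

/-- `k_min := ⌈√n⌉`. -/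
def kminEst (n : ℕ) : ℕ := ⌈Real.sqrt n⌉₊

/-- The dyadic collection `K₀ = {k_min, 2 k_min, …, k_max}` with `k_max ∈ (n/2, n]`. -/
def K0 (n : ℕ) : Set ℕ := {k | ∃ j : ℕ, k = 2 ^ j * kminEst n ∧ k ≤ n}

/-- `α_{k₀} := 2α / (π² (1 + log₂(k₀/k_min))²)`. -/
def alphaDyadic (n k₀ : ℕ) (α : ℝ) : ℝ :=
  2 * α / (π ^ 2 * (1 + Real.logb 2 ((k₀ : ℝ) / kminEst n)) ^ 2)

/-- The Higher-Criticism estimator `k̂_HC`. -/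
def khatHC (n : ℕ) (σ α : ℝ) (Y : Fin n → ℝ) : ℝ :=
  max (Ncount Y (σ * tHCstar n (α / 3)) : ℝ)
    (sSup {x : ℝ | ∃ t : ℕ, 1 ≤ t ∧ t ≤ tHCstar n (α / 3) ∧
      x = ((Ncount Y (σ * t) : ℝ) - 2 * n * gaussSurv t - uHC n t (α / 3)) /
        (1 - 2 * gaussSurv t)})

/-- The bulk estimator `k̂_B`. -/
def khatB (n : ℕ) (σ α : ℝ) (Y : Fin n → ℝ) : ℝ :=
  sSup {x : ℝ | ∃ k₀ ∈ K0 n, x = Zstat σ (sB n k₀) Y - uB n k₀ (alphaDyadic n k₀ α)}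

/-- The intermediary estimator `k̂_I`. -/
def khatI (n : ℕ) (σ α : ℝ) (Y : Fin n → ℝ) : ℝ :=
  sSup {x : ℝ | ∃ k₀ ∈ K0 n, 20 * Real.sqrt n ≤ (k₀ : ℝ) ∧ ∃ l ∈ Lcal n k₀,
    x = (Vstat σ (rI k₀ l) (wI n l) Y - uI n k₀ l (alphaDyadic n k₀ α)) /
      (1 + (l : ℝ) / (k₀ : ℝ))}

/-- The sparsity estimator `k̂ := ⌈k̂_HC⌉ ∨ ⌈k̂_B⌉ ∨ ⌈k̂_I⌉`. -/
def khat (n : ℕ) (σ α : ℝ) (Y : Fin n → ℝ) : ℤ :=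
  max (max ⌈khatHC n σ α Y⌉ ⌈khatB n σ α Y⌉) ⌈khatI n σ α Y⌉

/-! ## Statistics and tests (unknown variance) -/

/-- Empirical characteristic function (real part) `φ̄_n(u) = n⁻¹ Σᵢ cos(u Yᵢ)`. -/
def empChar {n : ℕ} (Y : Fin n → ℝ) (u : ℝ) : ℝ := (∑ i, Real.cos (u * Y i)) / n

/-- The frequency `v` with `v² = (2/σ₊²)(log(1 + k₀/√n) ∨ 1)`. -/
def vHC (n k₀ : ℕ) (σp : ℝ) : ℝ :=
  Real.sqrt (2 / σp ^ 2 * max (Real.log (1 + (k₀ : ℝ) / Real.sqrt n)) 1)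

/-- Variance estimator `σ̂` with `σ̂² = -(2/v²) log(φ̄_n(v))`. -/
def sigHat (n k₀ : ℕ) (σp : ℝ) (Y : Fin n → ℝ) : ℝ :=
  Real.sqrt (-(2 / (vHC n k₀ σp) ^ 2) * Real.log (empChar Y (vHC n k₀ σp)))

/-- `t*^{HC,var}_α := ⌈2√(2 log(4n/α))⌉`. -/
def tHCvarStar (n : ℕ) (α : ℝ) : ℕ := ⌈2 * Real.sqrt (2 * Real.log (4 * n / α))⌉₊

/-- Threshold `u^{HC,var}_{t,α}`. -/
def uHCvar (n k₀ t : ℕ) (α σm σp : ℝ) : ℝ :=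
  Real.sqrt (4 * n * gaussSurv t * Real.log ((t : ℝ) ^ 2 * π ^ 2 / α)) +
    2 / 3 * Real.log ((t : ℝ) ^ 2 * π ^ 2 / α) +
    8 * t * (σp ^ 3 / σm ^ 3) * ((k₀ : ℝ) / Real.log (1 + (k₀ : ℝ) / Real.sqrt n)) *
      stdGaussDens t * Real.sqrt (Real.log (6 / α))

/-- The adaptive Higher-Criticism test `T^{HC,var}_{α,k₀}` (rejection event). -/
def THCvar (n : ℕ) (σm σp α : ℝ) (k₀ : ℕ) (Y : Fin n → ℝ) : Prop :=
  k₀ + 1 ≤ Ncount Y (σp * tHCvarStar n α) ∨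
    ∃ t : ℕ, 1 ≤ t ∧
      (k₀ : ℝ) + 2 * ((n : ℝ) - k₀) * gaussSurv ((t : ℝ) * σp / sigHat n k₀ σp Y) +
          uHCvar n k₀ t α σm σp ≤ (Ncount Y (σp * t) : ℝ)

/-- `P_B(ξ) := 4ξ - 3`. -/
def PBpoly (ξ : ℝ) : ℝ := 4 * ξ - 3

/-- The adaptive bulk statistic `Z^{var}(s)`. -/
def Zvar (n : ℕ) (σp s : ℝ) (Y : Fin n → ℝ) : ℝ :=
  n * ∫ ξ in (0 : ℝ)..1, PBpoly ξ * Real.log (max (empChar Y (s * ξ / σp)) 0)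

/-- `s^{var}_{k₀} := √(1 + log(k₀/√n)) ∨ 1`. -/
def sVar (n k₀ : ℕ) : ℝ :=
  max (Real.sqrt (1 + Real.log ((k₀ : ℝ) / Real.sqrt n))) 1

/-- The adaptive bulk test `T^{B,var}_{α,k₀}` (rejection event). -/
def TBvar (n : ℕ) (σp α : ℝ) (k₀ : ℕ) (Y : Fin n → ℝ) : Prop :=
  1.09 * (k₀ : ℝ) + 16 * (k₀ : ℝ) ^ 2 / n +
      4 * Real.sqrt (Real.exp 1) *
        max (Real.sqrt ((k₀ : ℝ) * Real.sqrt n)) (Real.sqrt n) *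
        Real.sqrt (Real.log (2 / α)) ≤
    Zvar n σp (sVar n k₀) Y

/-- `r_{k₀,l} := √(16 log(k₀/l))` (unknown-variance version). -/
def rIvar (k₀ l : ℕ) : ℝ := Real.sqrt (16 * Real.log ((k₀ : ℝ) / l))

/-- `κ_l`. -/
def kappaL (r : ℝ) : ℝ :=
  -2 * r ^ 3 * stdGaussDens r - 6 * r * stdGaussDens r + 3 * (1 - 2 * gaussSurv r)

/-- `ζ_l`. -/
def zetaL (r : ℝ) : ℝ := -2 * r * stdGaussDens r + 1 - 2 * gaussSurv r

/-- `γ_l`. -/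
def gammaL (r : ℝ) : ℝ := (kappaL r - zetaL r)⁻¹

/-- `δ_l`. -/
def deltaL (r : ℝ) : ℝ := 4 * gammaL r * (r + 4 / r) * stdGaussDens r

/-- `P_l(t) := γ_l (ζ_l t² - κ_l)`. -/
def PLpoly (r t : ℝ) : ℝ := gammaL r * (zetaL r * t ^ 2 - kappaL r)

/-- The adaptive intermediary statistic `V^{var}(r, w)`. -/
def Vvar (n : ℕ) (σp r w : ℝ) (Y : Fin n → ℝ) : ℝ :=
  n * r * ∫ ξ in (-1 : ℝ)..1,
    PLpoly r (r * ξ) * stdGaussDens (r * ξ) * Real.log (max (empChar Y (w * ξ / σp)) 0)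

/-- The adaptive intermediary test `T^{I,var}_{α,k₀}` (rejection event). -/
def TIvar (n : ℕ) (σp α : ℝ) (k₀ : ℕ) (Y : Fin n → ℝ) : Prop :=
  ∃ l ∈ Lcal n k₀,
    (k₀ : ℝ) * (1 + deltaL (rIvar k₀ l)) + 32 * (k₀ : ℝ) ^ 2 / n +
        8 * Real.sqrt ((l : ℝ) * Real.sqrt n *
          Real.log (π ^ 2 * (1 + Real.logb 2 ((l : ℝ) / lmin n k₀)) ^ 2 / (3 * α))) ≤
      Vvar n σp (rIvar k₀ l) (wI n l) Y

/-- The combined adaptive test `T^{C,var}_{α,k₀}` (rejection event). -/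
def TCvar (n : ℕ) (σm σp α : ℝ) (k₀ : ℕ) (Y : Fin n → ℝ) : Prop :=
  if 20 * Real.sqrt n ≤ (k₀ : ℝ) then
    THCvar n σm σp (α / 3) k₀ Y ∨ TBvar n σp (α / 3) k₀ Y ∨ TIvar n σp (α / 3) k₀ Y
  else THCvar n σm σp (α / 2) k₀ Y ∨ TBvar n σp (α / 2) k₀ Y

/-- The trimmed coordinates `S(u, Y) := {i : |Yᵢ| > (u+1) σ₊ n²}`. -/
def trimSet (n : ℕ) (σp u : ℝ) (Y : Fin n → ℝ) : Finset (Fin n) :=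
  Finset.univ.filter fun i => (u + 1) * σp * (n : ℝ) ^ 2 < |Y i|

/-- The trimmed subvector `(Yᵢ)_{i ∉ S(u,Y)}`, of dimension `n - |S(u,Y)|`. -/
def trimVec (n : ℕ) (σp u : ℝ) (Y : Fin n → ℝ) :
    Fin (n - (trimSet n σp u Y).card) → ℝ :=
  fun j => Y ((trimSet n σp u Y)ᶜ.orderIsoOfFin (by simp [Finset.card_compl]) j).1

/-- The trimmed combined adaptive test `T̄^{C,var}_{α,k₀}` (rejection event),
as a function of the auxiliary uniform variable `u` and of `Y`. -/
def TCvarTrim (n : ℕ) (σm σp α : ℝ) (k₀ : ℕ) (u : ℝ) (Y : Fin n → ℝ) : Prop :=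
  k₀ < (trimSet n σp u Y).card ∨
    TCvar (n - (trimSet n σp u Y).card) σm σp α (k₀ - (trimSet n σp u Y).card)
      (trimVec n σp u Y)

/-- Joint law of `(U, Y)` where `U` is uniform on `[0,1]` independent of `Y ~ gaussP n θ σ`. -/
def jointP (n : ℕ) (θ : Fin n → ℝ) (σ : ℝ) : Measure (ℝ × (Fin n → ℝ)) :=
  (volume.restrict (Set.Icc (0 : ℝ) 1)).prod (gaussP n θ σ)

/-- The rate function `ψ^{var}_{k₀,q}`. -/
def psiVar (n k₀ q : ℕ) : ℝ :=
  if (k₀ : ℝ) ≤ Real.sqrt n then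
    if (q : ℝ) ≤ Real.sqrt n then Real.sqrt (Real.log (1 + Real.sqrt n / q))
    else Real.sqrt (Real.sqrt (Real.sqrt n / q))
  else if q ≤ k₀ then
    Real.sqrt (min ((Real.log (1 + (k₀ : ℝ) / q)) ^ 2 / Real.log (1 + (k₀ : ℝ) / Real.sqrt n))
      (Real.log (1 + (k₀ : ℝ) / q)))
  else
    Real.sqrt (Real.sqrt (k₀ : ℝ) / (Real.sqrt q * Real.log (1 + (k₀ : ℝ) / Real.sqrt n)))

/-- `arccosh`. -/
def arcosh (x : ℝ) : ℝ := Real.log (x + Real.sqrt (x ^ 2 - 1))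


/-! ### Auxiliary material for the moment-matching construction -/

section MomentMatchingAux

open Polynomial Finset

private lemma cos_nat_pi (i : ℕ) : Real.cos (i * π) = (-1 : ℝ) ^ i := by
  simpa using Real.cos_nat_mul_pi_sub 0 i

private lemma natDegree_T_le : ∀ n : ℕ, (Polynomial.Chebyshev.T ℝ (n : ℤ)).natDegree ≤ n := by
  intro n
  induction n using Nat.strong_induction_on with
  | _ n ih =>
    match n with
    | 0 => simp [Polynomial.Chebyshev.T_zero]
    | 1 => simp [Polynomial.Chebyshev.T_one]
    | (k+2) =>
      have h2 : ((k + 2 : ℕ) : ℤ) = (k : ℤ) + 2 := by push_cast; ring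
      rw [h2, Polynomial.Chebyshev.T_add_two]
      have e1 : ((k : ℤ) + 1) = ((k + 1 : ℕ) : ℤ) := by push_cast; ring
      have h1 : (Polynomial.Chebyshev.T ℝ ((k : ℤ) + 1)).natDegree ≤ k + 1 := by
        rw [e1]; exact ih (k + 1) (by omega)
      have h0 : (Polynomial.Chebyshev.T ℝ (k : ℤ)).natDegree ≤ k := ih k (by omega)
      refine le_trans (Polynomial.natDegree_sub_le _ _) ?_
      have h2X : (2 * X : ℝ[X]).natDegree ≤ 1 :=
        le_trans (Polynomial.natDegree_mul_le) (by simp)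
      have hm : (2 * X * Polynomial.Chebyshev.T ℝ ((k : ℤ) + 1)).natDegree ≤ k + 2 := by
        refine le_trans (Polynomial.natDegree_mul_le) ?_
        omega
      simp only [max_le_iff]
      exact ⟨hm, by omega⟩

private lemma T_eval_neg_cosh (K : ℕ) (y : ℝ) :
    (Polynomial.Chebyshev.T ℝ (K : ℤ)).eval (-Real.cosh y) = (-1 : ℝ) ^ K * Real.cosh (K * y) := by
  have key : (((Polynomial.Chebyshev.T ℝ (K : ℤ)).eval (-Real.cosh y) : ℝ) : ℂ)
      = (((-1 : ℝ) ^ K * Real.cosh (K * y) : ℝ) : ℂ) := by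
    have hmap : (Polynomial.Chebyshev.T ℂ (K : ℤ))
        = (Polynomial.Chebyshev.T ℝ (K : ℤ)).map (Complex.ofRealHom) :=
      (Polynomial.Chebyshev.map_T Complex.ofRealHom (K : ℤ)).symm
    have h1 : (((Polynomial.Chebyshev.T ℝ (K : ℤ)).eval (-Real.cosh y) : ℝ) : ℂ)
        = (Polynomial.Chebyshev.T ℂ (K : ℤ)).eval (((-Real.cosh y : ℝ) : ℂ)) := by
      rw [hmap, Polynomial.eval_map]
      exact (Polynomial.eval₂_at_apply Complex.ofRealHom _).symm
    rw [h1]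
    have hc : ((-Real.cosh y : ℝ) : ℂ) = Complex.cos (↑π + ↑y * Complex.I) := by
      rw [Complex.cos_add, Complex.cos_mul_I, ← Complex.ofReal_cos, ← Complex.ofReal_sin,
        Real.cos_pi, Real.sin_pi, ← Complex.ofReal_cosh]
      push_cast
      ring
    rw [hc, Polynomial.Chebyshev.T_complex_cos]
    have harg : ((K : ℤ) : ℂ) * (↑π + ↑y * Complex.I)
        = ↑((K : ℝ) * π) + ↑((K : ℝ) * y) * Complex.I := by push_cast; ring
    rw [harg, Complex.cos_add, Complex.cos_mul_I, ← Complex.ofReal_cos, ← Complex.ofReal_sin,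
      ← Complex.ofReal_cosh, cos_nat_pi, Real.sin_nat_mul_pi]
    push_cast
    ring
  exact_mod_cast key

private lemma key_weights (K : ℕ) (hK : 1 ≤ K) (b : ℝ) (hb0 : 0 < b) (hb1 : b < 1) :
    ∃ u w : ℕ → ℝ,
      (∀ i ∈ Finset.range (K + 1), b ≤ u i ∧ u i ≤ 1) ∧
      (∀ j : ℕ, 1 ≤ j → j ≤ K → ∑ i ∈ Finset.range (K + 1), w i * u i ^ j = 0) ∧
      (∑ i ∈ Finset.range (K + 1), w i = 1) ∧
      (∑ i ∈ Finset.range (K + 1), |w i| =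
        (-1 : ℝ) ^ K * (Polynomial.Chebyshev.T ℝ (K : ℤ)).eval (-((1 + b) / (1 - b)))) := by
  have hKR : (0 : ℝ) < K := by exact_mod_cast hK
  set s : Finset ℕ := Finset.range (K + 1) with hs
  set θ : ℕ → ℝ := fun i => i * π / K with hθ
  set u : ℕ → ℝ := fun i => (1 + b) / 2 + (1 - b) / 2 * Real.cos (θ i) with hu
  have hbpos : 0 < (1 - b) / 2 := by linarith
  have hθmem : ∀ i ∈ s, θ i ∈ Set.Icc 0 π := by
    intro i hi
    simp only [hs, Finset.mem_range] at hi
    have hiK : (i : ℝ) ≤ K := by exact_mod_cast Nat.lt_succ_iff.mp hi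
    constructor
    · rw [hθ]; positivity
    · rw [hθ]
      simp only []
      rw [div_le_iff₀ hKR]
      nlinarith [Real.pi_pos]
  have hanti : ∀ i ∈ s, ∀ j ∈ s, i < j → u j < u i := by
    intro i hi j hj hij
    have hθlt : θ i < θ j := by
      rw [hθ]
      simp only []
      have hij' : (i : ℝ) < j := by exact_mod_cast hij
      gcongr
    have hcos := Real.strictAntiOn_cos (hθmem i hi) (hθmem j hj) hθlt
    rw [hu]
    simp only []
    nlinarith
  have hinj : Set.InjOn u s := by
    intro i hi j hj hij
    rcases lt_trichotomy i j with h | h | h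
    · exact absurd hij (ne_of_gt (hanti i hi j hj h))
    · exact h
    · exact absurd hij (ne_of_gt (hanti j hj i hi h)).symm
  have hur : ∀ i ∈ s, b ≤ u i ∧ u i ≤ 1 := by
    intro i hi
    have h1 := Real.neg_one_le_cos (θ i)
    have h2 := Real.cos_le_one (θ i)
    rw [hu]
    constructor
    · simp only []; nlinarith
    · simp only []; nlinarith
  have hupos : ∀ i ∈ s, 0 < u i := fun i hi => lt_of_lt_of_le hb0 (hur i hi).1
  set w : ℕ → ℝ := fun i => (Lagrange.basis s u i).eval 0 with hw
  have hcard : s.card = K + 1 := Finset.card_range _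
  have hinterp : ∀ f : ℝ[X], f.degree < ((K + 1 : ℕ) : WithBot ℕ) →
      f.eval 0 = ∑ i ∈ s, f.eval (u i) * w i := by
    intro f hdeg
    have hd : f.degree < (s.card : WithBot ℕ) := by rw [hcard]; exact_mod_cast hdeg
    have heq := Lagrange.eq_interpolate (v := u) hinj hd
    conv_lhs => rw [heq]
    rw [Lagrange.interpolate_apply, Polynomial.eval_finset_sum]
    exact Finset.sum_congr rfl fun i _ => by rw [Polynomial.eval_mul, Polynomial.eval_C]
  have hmom : ∀ j : ℕ, 1 ≤ j → j ≤ K → ∑ i ∈ s, w i * u i ^ j = 0 := by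
    intro j hj1 hjK
    have hd : (X ^ j : ℝ[X]).degree < ((K + 1 : ℕ) : WithBot ℕ) := by
      rw [Polynomial.degree_X_pow]
      exact_mod_cast Nat.lt_succ_of_le hjK
    have h := hinterp (X ^ j) hd
    simp only [Polynomial.eval_pow, Polynomial.eval_X] at h
    rw [zero_pow (by omega : j ≠ 0)] at h
    rw [Finset.sum_congr rfl (fun i _ => mul_comm (w i) (u i ^ j))]
    exact h.symm
  have hone : ∑ i ∈ s, w i = 1 := by
    have hd : (1 : ℝ[X]).degree < ((K + 1 : ℕ) : WithBot ℕ) := by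
      rw [Polynomial.degree_one]
      exact_mod_cast Nat.succ_pos K
    have h := hinterp 1 hd
    simp only [Polynomial.eval_one, one_mul] at h
    exact h.symm
  have hwprod : ∀ i, w i = ∏ j ∈ s.erase i, ((u i - u j)⁻¹ * (0 - u j)) := by
    intro i
    rw [hw]
    simp only []
    rw [Lagrange.basis, Polynomial.eval_prod]
    exact Finset.prod_congr rfl fun j _ => by
      simp [Lagrange.basisDivisor]
  have hsign : ∀ i ∈ s, |w i| = (-1 : ℝ) ^ (K - i) * w i := by
    intro i hi
    have hiK : i ≤ K := by
      simpa only [hs, Finset.mem_range, Nat.lt_succ_iff] using hi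
    have hpos : 0 < (-1 : ℝ) ^ (K - i) * w i := by
      rw [hwprod i]
      have hfil : (s.erase i).filter (fun j => i < j) = Finset.Ico (i + 1) (K + 1) := by
        ext j
        simp only [hs, Finset.mem_filter, Finset.mem_erase, Finset.mem_range, Finset.mem_Ico]
        omega
      have hconst : ∏ j ∈ s.erase i, (if i < j then (-1 : ℝ) else 1) = (-1 : ℝ) ^ (K - i) := by
        rw [← Finset.prod_filter_mul_prod_filter_not (s.erase i) (fun j => i < j)]
        have hcard2 : ((s.erase i).filter (fun j => i < j)).card = K - i := by
          rw [hfil, Nat.card_Ico]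
          omega
        rw [Finset.prod_congr rfl (fun j hj => if_pos (Finset.mem_filter.mp hj).2),
          Finset.prod_const, hcard2,
          Finset.prod_eq_one (fun j hj => if_neg (Finset.mem_filter.mp hj).2), mul_one]
      have hsplit : (-1 : ℝ) ^ (K - i) * ∏ j ∈ s.erase i, ((u i - u j)⁻¹ * (0 - u j))
          = ∏ j ∈ s.erase i, ((if i < j then (-1 : ℝ) else 1) * ((u i - u j)⁻¹ * (0 - u j))) := by
        conv_rhs => rw [Finset.prod_mul_distrib]
        rw [hconst]
      rw [hsplit]
      apply Finset.prod_pos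
      intro j hj
      obtain ⟨hji, hjs⟩ := Finset.mem_erase.mp hj
      rcases lt_trichotomy i j with h | h | h
      · rw [if_pos h]
        have h1 : u j < u i := hanti i hi j hjs h
        have h2 : 0 < u j := hupos j hjs
        have h3 : 0 < (u i - u j)⁻¹ := inv_pos.mpr (by linarith)
        nlinarith [mul_pos h3 h2]
      · exact absurd h.symm hji
      · rw [if_neg (by omega)]
        have h1 : u i < u j := hanti j hjs i hi h
        have h2 : 0 < u j := hupos j hjs
        have h3 : (u i - u j)⁻¹ < 0 := inv_lt_zero.mpr (by linarith)
        nlinarith [mul_pos_of_neg_of_neg h3 (show 0 - u j < 0 by linarith)]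
    have habs : |w i| = |(-1 : ℝ) ^ (K - i) * w i| := by
      rw [abs_mul, abs_pow, abs_neg, abs_one, one_pow, one_mul]
    rw [habs, abs_of_pos hpos]
  have hT : (Polynomial.Chebyshev.T ℝ (K : ℤ)).eval (-((1 + b) / (1 - b)))
      = ∑ i ∈ s, (-1 : ℝ) ^ i * w i := by
    set k₁ : ℝ := 2 / (1 - b) with hk₁
    set k₀ : ℝ := (1 + b) / (1 - b) with hk₀
    have hb1' : (1 : ℝ) - b ≠ 0 := by linarith
    set f : ℝ[X] := (Polynomial.Chebyshev.T ℝ (K : ℤ)).comp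
      (Polynomial.C k₁ * Polynomial.X - Polynomial.C k₀) with hf
    have hdeg : f.degree < ((K + 1 : ℕ) : WithBot ℕ) := by
      have hlin : (Polynomial.C k₁ * Polynomial.X - Polynomial.C k₀).natDegree ≤ 1 := by
        refine le_trans (Polynomial.natDegree_sub_le _ _) ?_
        simp only [max_le_iff]
        constructor
        · exact le_trans (Polynomial.natDegree_mul_le) (by simp)
        · simp
      have h1 : f.natDegree ≤ K := by
        refine le_trans (Polynomial.natDegree_comp_le) ?_
        calc (Polynomial.Chebyshev.T ℝ (K : ℤ)).natDegree *
              (Polynomial.C k₁ * Polynomial.X - Polynomial.C k₀).natDegree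
            ≤ K * 1 := Nat.mul_le_mul (natDegree_T_le K) hlin
          _ = K := by ring
      calc f.degree ≤ (f.natDegree : WithBot ℕ) := Polynomial.degree_le_natDegree
        _ ≤ ((K : ℕ) : WithBot ℕ) := by exact_mod_cast h1
        _ < ((K + 1 : ℕ) : WithBot ℕ) := by exact_mod_cast Nat.lt_succ_self K
    have heval : ∀ i ∈ s, f.eval (u i) = (-1 : ℝ) ^ i := by
      intro i hi
      rw [hf, Polynomial.eval_comp]
      have harg : (Polynomial.C k₁ * Polynomial.X - Polynomial.C k₀).eval (u i)
          = Real.cos (θ i) := by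
        simp only [Polynomial.eval_sub, Polynomial.eval_mul, Polynomial.eval_C,
          Polynomial.eval_X]
        rw [hu, hk₁, hk₀]
        simp only []
        field_simp
        ring
      rw [harg, Polynomial.Chebyshev.T_real_cos]
      have hKθ : ((K : ℤ) : ℝ) * θ i = i * π := by
        rw [hθ]
        simp only []
        push_cast
        field_simp
      rw [hKθ, cos_nat_pi]
    have h0 : f.eval 0 = (Polynomial.Chebyshev.T ℝ (K : ℤ)).eval (-k₀) := by
      rw [hf, Polynomial.eval_comp]
      simp
    have h := hinterp f hdeg
    rw [h0] at h
    rw [show -((1 + b) / (1 - b)) = -k₀ by rw [hk₀]]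
    rw [h]
    exact Finset.sum_congr rfl fun i hi => by rw [heval i hi]
  refine ⟨u, w, hur, hmom, hone, ?_⟩
  rw [hT, Finset.mul_sum]
  refine Finset.sum_congr rfl fun i hi => ?_
  have hiK : i ≤ K := by simpa only [hs, Finset.mem_range, Nat.lt_succ_iff] using hi
  rw [hsign i hi]
  have hKsplit : (-1 : ℝ) ^ K = (-1 : ℝ) ^ i * (-1 : ℝ) ^ (K - i) := by
    rw [← pow_add]
    congr 1
    omega
  rw [hKsplit]
  have h2 : ((-1 : ℝ) ^ i) * ((-1 : ℝ) ^ i) = 1 := by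
    rw [← pow_add]; exact Even.neg_one_pow ⟨i, rfl⟩
  linear_combination (-((-1 : ℝ) ^ (K - i) * w i)) * h2

private lemma integrable_dirac'' (f : ℝ → ℝ) (a : ℝ) : Integrable f (Measure.dirac a) :=
  (integrable_const (f a)).congr (MeasureTheory.ae_eq_dirac f).symm

/-- A symmetric pair of Dirac masses. -/
private def pairM (r : ℝ) (x : ℝ) : Measure ℝ :=
  (ENNReal.ofReal r) • (Measure.dirac x + Measure.dirac (-x))

private lemma pairM_map_neg (r x : ℝ) : (pairM r x).map (fun t => -t) = pairM r x := by
  rw [pairM, Measure.map_smul, Measure.map_add _ _ measurable_neg,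
    Measure.map_dirac' measurable_neg, Measure.map_dirac' measurable_neg, neg_neg, add_comm]

private lemma pairM_apply_zero (r x : ℝ) {t : Set ℝ} (ht : MeasurableSet t) (hx : x ∉ t)
    (hx' : -x ∉ t) : pairM r x t = 0 := by
  rw [pairM, Measure.smul_apply, Measure.add_apply, Measure.dirac_apply' _ ht,
    Measure.dirac_apply' _ ht]
  simp [Set.indicator_of_notMem, hx, hx']

private lemma pairM_univ (r : ℝ) (hr : 0 ≤ r) (x : ℝ) :
    pairM r x Set.univ = ENNReal.ofReal (2 * r) := by
  have h1 : (Measure.dirac x + Measure.dirac (-x)) (Set.univ : Set ℝ) = 2 := by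
    rw [Measure.add_apply]
    simp [one_add_one_eq_two]
  rw [pairM, Measure.smul_apply, h1, smul_eq_mul, show (2 : ℝ) * r = r * 2 by ring,
    ENNReal.ofReal_mul hr, ENNReal.ofReal_ofNat]

private lemma pairM_integral (r : ℝ) (hr : 0 ≤ r) (x : ℝ) (f : ℝ → ℝ) :
    ∫ t, f t ∂(pairM r x) = r * (f x + f (-x)) := by
  rw [pairM, MeasureTheory.integral_smul_measure,
    MeasureTheory.integral_add_measure (integrable_dirac'' f x) (integrable_dirac'' f (-x)),
    MeasureTheory.integral_dirac, MeasureTheory.integral_dirac,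
    ENNReal.toReal_ofReal hr, smul_eq_mul]

private lemma pairM_integrable (r x : ℝ) (f : ℝ → ℝ) : Integrable f (pairM r x) :=
  ((integrable_dirac'' f x).add_measure (integrable_dirac'' f (-x))).smul_measure
    ENNReal.ofReal_ne_top

private lemma map_neg_sum (s : Finset ℕ) (μ : ℕ → Measure ℝ)
    (h : ∀ i ∈ s, (μ i).map (fun t => -t) = μ i) :
    (∑ i ∈ s, μ i).map (fun t => -t) = ∑ i ∈ s, μ i := by
  classical
  induction s using Finset.induction_on with
  | empty => simp
  | insert _ _ ha ih =>
    rw [Finset.sum_insert ha, Measure.map_add _ _ measurable_neg,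
      h _ (Finset.mem_insert_self _ _), ih (fun i hi => h i (Finset.mem_insert_of_mem hi))]

private lemma cosh_arcosh {x : ℝ} (hx : 1 ≤ x) : Real.cosh (arcosh x) = x := by
  have hx2 : (0 : ℝ) ≤ x ^ 2 - 1 := by nlinarith
  have hs : Real.sqrt (x ^ 2 - 1) ^ 2 = x ^ 2 - 1 := Real.sq_sqrt hx2
  have hsn : 0 ≤ Real.sqrt (x ^ 2 - 1) := Real.sqrt_nonneg _
  have hy : 0 < x + Real.sqrt (x ^ 2 - 1) := by linarith
  rw [arcosh, Real.cosh_log hy]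
  have hinv : (x + Real.sqrt (x ^ 2 - 1))⁻¹ = x - Real.sqrt (x ^ 2 - 1) := by
    apply inv_eq_of_mul_eq_one_right
    nlinarith
  rw [hinv]
  ring

end MomentMatchingAux


/-- existence of two symmetric moment-matching measures supported in
`[-1, -a_m] ∪ [a_m, 1]` with `a_m = tanh(arccosh((1+p)/(1-p))/m)`. -/
theorem moment_matching_measures (m : ℕ) (hm : 0 < m) (hme : Even m)
    (p : ℝ) (hp : p ∈ Set.Ioo (0 : ℝ) 1) :
    ∃ ν₀ ν₁ : Measure ℝ,
      ν₀.map (fun t => -t) = ν₀ ∧ ν₁.map (fun t => -t) = ν₁ ∧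
      ν₀ (Set.Icc (-1 : ℝ) (-(Real.tanh (1 / m * arcosh ((1 + p) / (1 - p))))) ∪
          Set.Icc (Real.tanh (1 / m * arcosh ((1 + p) / (1 - p)))) 1)ᶜ = 0 ∧
      ν₁ (Set.Icc (-1 : ℝ) (-(Real.tanh (1 / m * arcosh ((1 + p) / (1 - p))))) ∪
          Set.Icc (Real.tanh (1 / m * arcosh ((1 + p) / (1 - p)))) 1)ᶜ = 0 ∧
      ν₀ Set.univ = ENNReal.ofReal p ∧ ν₁ Set.univ = 1 ∧
      ∀ q : ℕ, 1 ≤ q → q ≤ m → ∫ t, t ^ q ∂ν₀ = ∫ t, t ^ q ∂ν₁ := by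
  obtain ⟨hp0, hp1⟩ := hp
  obtain ⟨K, hmK⟩ := hme
  have hK : 1 ≤ K := by omega
  have hm0 : ((m : ℝ)) ≠ 0 := Nat.cast_ne_zero.mpr hm.ne'
  have hmpos : (0 : ℝ) < m := by exact_mod_cast hm
  have h1p : (0 : ℝ) < 1 - p := by linarith
  set x : ℝ := (1 + p) / (1 - p) with hx
  have hx1 : 1 < x := by rw [hx, lt_div_iff₀ h1p]; linarith
  have hApos : 0 < arcosh x := by
    rw [arcosh]
    apply Real.log_pos
    nlinarith [Real.sqrt_nonneg (x ^ 2 - 1)]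
  have hcoshA : Real.cosh (arcosh x) = x := cosh_arcosh hx1.le
  set t₀ : ℝ := 1 / (m : ℝ) * arcosh x with ht₀
  have ht₀pos : 0 < t₀ := by rw [ht₀]; positivity
  set a : ℝ := Real.tanh t₀ with ha
  have hsinh : 0 < Real.sinh t₀ := by
    rw [← Real.sinh_zero]
    exact Real.sinh_lt_sinh.mpr ht₀pos
  have hcosh : 0 < Real.cosh t₀ := Real.cosh_pos t₀
  have ha0 : 0 < a := by rw [ha, Real.tanh_eq_sinh_div_cosh]; positivity
  have ha1 : a < 1 := by
    rw [ha, Real.tanh_eq_sinh_div_cosh, div_lt_one hcosh]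
    nlinarith [Real.cosh_sub_sinh t₀, Real.exp_pos (-t₀)]
  set b : ℝ := a ^ 2 with hb
  have hb0 : 0 < b := by positivity
  have hb1 : b < 1 := by nlinarith
  have hc2 : Real.cosh t₀ ^ 2 - Real.sinh t₀ ^ 2 = 1 := Real.cosh_sq_sub_sinh_sq t₀
  have hcosh2 : Real.cosh (2 * t₀) = (1 + b) / (1 - b) := by
    have hbb : b = Real.sinh t₀ ^ 2 / Real.cosh t₀ ^ 2 := by
      rw [hb, ha, Real.tanh_eq_sinh_div_cosh, div_pow]
    rw [hbb, Real.cosh_two_mul]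
    field_simp
    exact hc2

  obtain ⟨u, w, hur, hmom, hone, habs⟩ := key_weights K hK b hb0 hb1
  have hxval : (-1 : ℝ) ^ K *
      (Polynomial.Chebyshev.T ℝ (K : ℤ)).eval (-((1 + b) / (1 - b))) = x := by
    rw [← hcosh2, T_eval_neg_cosh]
    have hm2 : (m : ℝ) = 2 * K := by exact_mod_cast congrArg (Nat.cast (R := ℝ)) (by omega : m = 2 * K)
    have hKt : (K : ℝ) * (2 * t₀) = arcosh x := by
      rw [ht₀, hm2]
      have hKne : (K : ℝ) ≠ 0 := by positivity
      field_simp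
    rw [hKt, hcoshA, ← mul_assoc, ← pow_add, Even.neg_one_pow ⟨K, rfl⟩, one_mul]
  rw [hxval] at habs
  classical
  set s : Finset ℕ := Finset.range (K + 1) with hs
  set Spos : Finset ℕ := s.filter (fun i => 0 ≤ w i) with hSpos
  set Sneg : Finset ℕ := s.filter (fun i => ¬ 0 ≤ w i) with hSneg
  have habs_pos : ∀ i ∈ Spos, |w i| = w i := fun i hi =>
    abs_of_nonneg (Finset.mem_filter.mp hi).2
  have habs_neg : ∀ i ∈ Sneg, |w i| = -w i := fun i hi =>
    abs_of_neg (lt_of_not_ge (Finset.mem_filter.mp hi).2)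
  have hsum_split : ∑ i ∈ Spos, w i + ∑ i ∈ Sneg, w i = 1 :=
    (Finset.sum_filter_add_sum_filter_not s _ w).trans hone
  have habs_split : ∑ i ∈ Spos, w i - ∑ i ∈ Sneg, w i = x := by
    have h := (Finset.sum_filter_add_sum_filter_not s (fun i => 0 ≤ w i)
      (fun i => |w i|)).trans habs
    rw [Finset.sum_congr rfl habs_pos, Finset.sum_congr rfl habs_neg,
      Finset.sum_neg_distrib] at h
    linarith
  have hpx : (1 - p) * x = 1 + p := by rw [hx]; field_simp
  set c : ℕ → ℝ := fun i => (1 - p) * |w i| / 2 with hcdef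
  have hcnn : ∀ i, 0 ≤ c i := fun i =>
    div_nonneg (mul_nonneg h1p.le (abs_nonneg _)) (by norm_num)
  set ν₀ : Measure ℝ := ∑ i ∈ Sneg, pairM (c i) (Real.sqrt (u i)) with hν₀
  set ν₁ : Measure ℝ := ∑ i ∈ Spos, pairM (c i) (Real.sqrt (u i)) with hν₁
  have hmem : ∀ i ∈ s, Real.sqrt (u i) ∈ Set.Icc a 1 ∧
      -Real.sqrt (u i) ∈ Set.Icc (-1 : ℝ) (-a) := by
    intro i hi
    obtain ⟨hbu, hu1⟩ := hur i hi
    have h1 : a ≤ Real.sqrt (u i) := by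
      rw [show a = Real.sqrt b by rw [hb, Real.sqrt_sq ha0.le]]
      exact Real.sqrt_le_sqrt hbu
    have h2 : Real.sqrt (u i) ≤ 1 := Real.sqrt_le_one.mpr hu1
    exact ⟨⟨h1, h2⟩, ⟨by linarith, by linarith⟩⟩
  have hTc : MeasurableSet ((Set.Icc (-1 : ℝ) (-a) ∪ Set.Icc a 1)ᶜ) :=
    (measurableSet_Icc.union measurableSet_Icc).compl
  have hzero : ∀ t : Finset ℕ, t ⊆ s →
      (∑ i ∈ t, pairM (c i) (Real.sqrt (u i)))
        ((Set.Icc (-1 : ℝ) (-a) ∪ Set.Icc a 1)ᶜ) = 0 := by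
    intro t hts
    rw [Measure.finset_sum_apply]
    refine Finset.sum_eq_zero fun i hi => ?_
    obtain ⟨hmem1, hmem2⟩ := hmem i (hts hi)
    exact pairM_apply_zero _ _ hTc (fun hcon => hcon (Or.inr hmem1))
      (fun hcon => hcon (Or.inl hmem2))
  have hmass : ∀ t : Finset ℕ,
      (∑ i ∈ t, pairM (c i) (Real.sqrt (u i))) Set.univ
        = ENNReal.ofReal ((1 - p) * ∑ i ∈ t, |w i|) := by
    intro t
    rw [Measure.finset_sum_apply,
      Finset.sum_congr rfl (fun i (_ : i ∈ t) => pairM_univ (c i) (hcnn i) (Real.sqrt (u i))),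
      ← ENNReal.ofReal_sum_of_nonneg (fun i _ => by
        have h1 := abs_nonneg (w i); have h2 := hcnn i; linarith)]
    congr 1
    rw [Finset.mul_sum]
    refine Finset.sum_congr rfl fun i _ => ?_
    rw [hcdef]
    ring
  have hSposval : ∑ i ∈ Spos, |w i| = (x + 1) / 2 := by
    rw [Finset.sum_congr rfl habs_pos]; linarith
  have hSnegval : ∑ i ∈ Sneg, |w i| = (x - 1) / 2 := by
    rw [Finset.sum_congr rfl habs_neg, Finset.sum_neg_distrib]; linarith
  have hintegral : ∀ (t : Finset ℕ) (q : ℕ),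
      ∫ z, z ^ q ∂(∑ i ∈ t, pairM (c i) (Real.sqrt (u i)))
        = ∑ i ∈ t, c i * (Real.sqrt (u i) ^ q + (-Real.sqrt (u i)) ^ q) := by
    intro t q
    rw [MeasureTheory.integral_finset_sum_measure (fun i _ => pairM_integrable _ _ _)]
    exact Finset.sum_congr rfl fun i _ => pairM_integral (c i) (hcnn i) _ _
  refine ⟨ν₀, ν₁, ?_, ?_, ?_, ?_, ?_, ?_, ?_⟩
  · exact map_neg_sum _ _ (fun i _ => pairM_map_neg _ _)
  · exact map_neg_sum _ _ (fun i _ => pairM_map_neg _ _)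
  · exact hzero Sneg (Finset.filter_subset _ _)
  · exact hzero Spos (Finset.filter_subset _ _)
  · rw [hν₀, hmass, hSnegval]
    congr 1
    linear_combination hpx / 2
  · rw [hν₁, hmass, hSposval,
      show (1 - p) * ((x + 1) / 2) = 1 by linear_combination hpx / 2]
    exact ENNReal.ofReal_one
  · intro q hq1 hqm
    rw [hν₀, hν₁, hintegral, hintegral]
    rcases Nat.even_or_odd q with he | ho
    · obtain ⟨j, hj⟩ := he
      have hj1 : 1 ≤ j := by omega
      have hjK : j ≤ K := by omega
      have hval : ∀ i ∈ s, Real.sqrt (u i) ^ q + (-Real.sqrt (u i)) ^ q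
          = 2 * u i ^ j := by
        intro i hi
        have hu0 : (0 : ℝ) ≤ u i := le_trans hb0.le (hur i hi).1
        have hxq : Real.sqrt (u i) ^ q = u i ^ j := by
          rw [show q = 2 * j by omega, pow_mul, Real.sq_sqrt hu0]
        rw [Even.neg_pow ⟨j, hj⟩, hxq]
        ring
      have hL : ∑ i ∈ Sneg, c i * (Real.sqrt (u i) ^ q + (-Real.sqrt (u i)) ^ q)
          = -(1 - p) * ∑ i ∈ Sneg, w i * u i ^ j := by
        rw [Finset.mul_sum]
        refine Finset.sum_congr rfl fun i hi => ?_
        rw [hval i (Finset.mem_of_mem_filter i hi)]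
        show (1 - p) * |w i| / 2 * (2 * u i ^ j) = _
        rw [habs_neg i hi]
        ring
      have hR : ∑ i ∈ Spos, c i * (Real.sqrt (u i) ^ q + (-Real.sqrt (u i)) ^ q)
          = (1 - p) * ∑ i ∈ Spos, w i * u i ^ j := by
        rw [Finset.mul_sum]
        refine Finset.sum_congr rfl fun i hi => ?_
        rw [hval i (Finset.mem_of_mem_filter i hi)]
        show (1 - p) * |w i| / 2 * (2 * u i ^ j) = _
        rw [habs_pos i hi]
        ring
      have hsum : ∑ i ∈ Spos, w i * u i ^ j + ∑ i ∈ Sneg, w i * u i ^ j = 0 :=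
        (Finset.sum_filter_add_sum_filter_not s _ _).trans (hmom j hj1 hjK)
      rw [hL, hR]
      linear_combination (p - 1) * hsum
    · have hval : ∀ y : ℝ, y ^ q + (-y) ^ q = 0 := fun y => by
        rw [Odd.neg_pow ho]; ring
      simp only [hval, mul_zero]
      simp


end SparsityModel

end
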